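/- Let ψ_ε and Γ_ε(z) = ∫ ψ_ε(z+q)ψ_ε(q) dq be as in the smoothed-measure construction, and let Γ₀(z) = ν²(Δ_z)/ν²(Δ₀). Then for every z ∈ ℝ, Γ_ε(z) → Γ₀(z) as ε → 0+. -/

import Mathlib

open MeasureTheory Filter

/-- The rescaled function `φ_ε(q) = ε^{-1/2} φ(q/ε)`. -/
noncomputable def phiEps (φ : ℝ → ℝ) (ε q : ℝ) : ℝ := (Real.sqrt ε)⁻¹ * φ (q / ε)

/-- The autocorrelation `Φ_ε(z) = ∫ φ_ε(z+q) φ_ε(q) dq`. -/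
noncomputable def PhiEps (φ : ℝ → ℝ) (ε z : ℝ) : ℝ :=
  ∫ q : ℝ, phiEps φ ε (z + q) * phiEps φ ε q

/-- The normalizing constant `c_ε = [∫∫ Φ_ε(q₁-q₂) dν²]^{-1/2}`. -/
noncomputable def cEps (φ : ℝ → ℝ) (ν : Measure ℝ) (ε : ℝ) : ℝ :=
  (Real.sqrt (∫ p : ℝ × ℝ, PhiEps φ ε (p.1 - p.2) ∂ν.prod ν))⁻¹

/-- The smoothed density `ψ_ε(z) = c_ε ∫ φ_ε(z-q) dν(q)`. -/
noncomputable def psiEps (φ : ℝ → ℝ) (ν : Measure ℝ) (ε z : ℝ) : ℝ :=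
  cEps φ ν ε * ∫ q : ℝ, phiEps φ ε (z - q) ∂ν

section Aux

variable {φ : ℝ → ℝ}

lemma phiEps_nonneg (hnn : ∀ q : ℝ, 0 ≤ φ q) (ε q : ℝ) : 0 ≤ phiEps φ ε q :=
  mul_nonneg (inv_nonneg.2 (Real.sqrt_nonneg _)) (hnn _)

lemma phiEps_continuous (hφ : Continuous φ) (ε : ℝ) : Continuous (phiEps φ ε) :=
  continuous_const.mul (hφ.comp (continuous_id.div_const ε))

lemma phiEps_hcs (hsupp : HasCompactSupport φ) {ε : ℝ} (hε : ε ≠ 0) :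
    HasCompactSupport (phiEps φ ε) := by
  have h1 : HasCompactSupport (fun q : ℝ => φ (q / ε)) := by
    have : (fun q : ℝ => φ (q / ε)) = φ ∘ (Homeomorph.mulRight₀ ε⁻¹ (inv_ne_zero hε)) := by
      funext q; simp [div_eq_mul_inv, Homeomorph.mulRight₀]; rfl
    rw [this]
    exact hsupp.comp_homeomorph _
  have : phiEps φ ε = (fun _ : ℝ => (Real.sqrt ε)⁻¹) * (fun q : ℝ => φ (q / ε)) := rfl
  rw [this]
  exact h1.mul_left

lemma phiEps_integrable (hφ : Continuous φ) (hsupp : HasCompactSupport φ) {ε : ℝ} (hε : ε ≠ 0) :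
    Integrable (phiEps φ ε) := by
  exact (phiEps_continuous hφ ε).integrable_of_hasCompactSupport (phiEps_hcs hsupp hε)

lemma phiEps_sq_integrable (hφ : Continuous φ) (hsupp : HasCompactSupport φ) {ε : ℝ}
    (hε : ε ≠ 0) : Integrable (fun q => phiEps φ ε q ^ 2) := by
  have hc : Continuous (fun q => phiEps φ ε q ^ 2) := (phiEps_continuous hφ ε).pow 2
  apply hc.integrable_of_hasCompactSupport
  have : (fun q => phiEps φ ε q ^ 2) = phiEps φ ε * phiEps φ ε := by funext q; simp [Pi.mul_apply]; ring
  rw [this]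
  exact (phiEps_hcs hsupp hε).mul_right

lemma integral_phiEps_sq (hnorm : ∫ q : ℝ, (φ q) ^ 2 = 1) {ε : ℝ} (hε : 0 < ε) :
    ∫ q : ℝ, phiEps φ ε q ^ 2 = 1 := by
  have h1 : ∀ q : ℝ, phiEps φ ε q ^ 2 = ε⁻¹ * (φ (q / ε)) ^ 2 := by
    intro q
    simp only [phiEps, mul_pow, inv_pow]
    rw [Real.sq_sqrt hε.le]
  simp_rw [h1]
  rw [integral_const_mul, Measure.integral_comp_div (fun x => φ x ^ 2) ε, smul_eq_mul, hnorm,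
    abs_of_pos hε]
  field_simp

lemma integral_phiEps_sq_shift (hnorm : ∫ q : ℝ, (φ q) ^ 2 = 1) {ε : ℝ} (hε : 0 < ε) (w : ℝ) :
    ∫ q : ℝ, phiEps φ ε (w + q) ^ 2 = 1 := by
  have h := integral_add_right_eq_self (μ := volume) (fun x => phiEps φ ε x ^ 2) w
  simp_rw [add_comm w]
  rw [h]
  exact integral_phiEps_sq hnorm hε

lemma PhiEps_nonneg (hnn : ∀ q : ℝ, 0 ≤ φ q) (ε w : ℝ) : 0 ≤ PhiEps φ ε w :=
  integral_nonneg fun q => mul_nonneg (phiEps_nonneg hnn ε _) (phiEps_nonneg hnn ε _)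

lemma PhiEps_zero (hnorm : ∫ q : ℝ, (φ q) ^ 2 = 1) {ε : ℝ} (hε : 0 < ε) :
    PhiEps φ ε 0 = 1 := by
  unfold PhiEps
  simp_rw [zero_add, ← pow_two]
  exact integral_phiEps_sq hnorm hε

lemma PhiEps_le_one (hφ : Continuous φ) (hsupp : HasCompactSupport φ)
    (hnn : ∀ q : ℝ, 0 ≤ φ q) (hnorm : ∫ q : ℝ, (φ q) ^ 2 = 1) {ε : ℝ} (hε : 0 < ε) (w : ℝ) :
    PhiEps φ ε w ≤ 1 := by
  have hint2 : Integrable (fun q => phiEps φ ε q ^ 2) := phiEps_sq_integrable hφ hsupp hε.ne'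
  have hintw : Integrable (fun q => phiEps φ ε (w + q) ^ 2) := by
    have := hint2.comp_add_right w
    simpa [add_comm] using this
  have hle : PhiEps φ ε w ≤ ∫ q : ℝ, (phiEps φ ε (w + q) ^ 2 + phiEps φ ε q ^ 2) / 2 := by
    apply integral_mono_of_nonneg
    · exact ae_of_all _ fun q => mul_nonneg (phiEps_nonneg hnn ε _) (phiEps_nonneg hnn ε _)
    · exact (hintw.add hint2).div_const 2
    · exact ae_of_all _ fun q => by nlinarith [sq_nonneg (phiEps φ ε (w + q) - phiEps φ ε q)]
  calc PhiEps φ ε w ≤ ∫ q : ℝ, (phiEps φ ε (w + q) ^ 2 + phiEps φ ε q ^ 2) / 2 := hle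
    _ = ((∫ q : ℝ, phiEps φ ε (w + q) ^ 2) + ∫ q : ℝ, phiEps φ ε q ^ 2) / 2 := by
        rw [integral_div, integral_add hintw hint2]
    _ = 1 := by rw [integral_phiEps_sq_shift hnorm hε w, integral_phiEps_sq hnorm hε]; norm_num

lemma PhiEps_eq_zero {R : ℝ} (hR0 : 0 < R) (hR : ∀ x : ℝ, R < |x| → φ x = 0)
    {ε : ℝ} (hε : 0 < ε) {w : ℝ} (hw : R * ε * 2 < |w|) : PhiEps φ ε w = 0 := by
  have key : ∀ q : ℝ, phiEps φ ε (w + q) * phiEps φ ε q = 0 := by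
    intro q
    rcases le_or_gt (|w + q|) (R * ε) with h | h
    · have hq : R * ε < |q| := by
        have h2 : |w| - |w + q| ≤ |q| := by
          have := abs_sub_abs_le_abs_sub w (w + q)
          simp only [sub_add_cancel_left, abs_neg] at this
          linarith
        linarith
      have : φ (q / ε) = 0 := by
        apply hR
        rw [abs_div, abs_of_pos hε, lt_div_iff₀ hε]
        linarith
      simp [phiEps, this]
    · have : φ ((w + q) / ε) = 0 := by
        apply hR
        rw [abs_div, abs_of_pos hε, lt_div_iff₀ hε]
        linarith
      simp [phiEps, this]
  unfold PhiEps
  simp_rw [key]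
  exact integral_zero _ _

lemma PhiEps_even (ε w : ℝ) : PhiEps φ ε (-w) = PhiEps φ ε w := by
  calc PhiEps φ ε (-w)
      = ∫ q : ℝ, (fun x => phiEps φ ε (w + x) * phiEps φ ε x) (q + -w) := by
        unfold PhiEps
        congr 1
        funext q
        show phiEps φ ε (-w + q) * phiEps φ ε q =
          phiEps φ ε (w + (q + -w)) * phiEps φ ε (q + -w)
        rw [show w + (q + -w) = q by ring, show -w + q = q + -w by ring, mul_comm]
    _ = PhiEps φ ε w :=
        integral_add_right_eq_self (fun x => phiEps φ ε (w + x) * phiEps φ ε x) (-w)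

lemma PhiEps_aesm (hφ : Continuous φ) (ν : Measure ℝ) (ε z : ℝ) :
    AEStronglyMeasurable (fun p : ℝ × ℝ => PhiEps φ ε (z + p.2 - p.1)) (ν.prod ν) := by
  have hc : Continuous (fun x : (ℝ × ℝ) × ℝ =>
      phiEps φ ε (z + x.1.2 - x.1.1 + x.2) * phiEps φ ε x.2) := by
    apply Continuous.mul
    · exact (phiEps_continuous hφ ε).comp (by fun_prop)
    · exact (phiEps_continuous hφ ε).comp continuous_snd
  exact (hc.stronglyMeasurable.integral_prod_right').aestronglyMeasurable

lemma tendsto_integral_PhiEps (hφ : Continuous φ) (hsupp : HasCompactSupport φ)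
    (hnn : ∀ q : ℝ, 0 ≤ φ q) (hnorm : ∫ q : ℝ, (φ q) ^ 2 = 1)
    (ν : Measure ℝ) [IsFiniteMeasure ν] (z : ℝ) :
    Tendsto (fun ε : ℝ => ∫ p : ℝ × ℝ, PhiEps φ ε (z + p.2 - p.1) ∂ν.prod ν)
      (nhdsWithin 0 (Set.Ioi 0))
      (nhds ((ν.prod ν {p : ℝ × ℝ | p.1 - p.2 = z}).toReal)) := by
  obtain ⟨R, hR0, hR⟩ : ∃ R > (0:ℝ), ∀ x : ℝ, R < |x| → φ x = 0 := by
    obtain ⟨R, hRb⟩ := hsupp.isBounded.subset_closedBall 0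
    refine ⟨max R 1, lt_max_of_lt_right one_pos, fun x hx => ?_⟩
    apply image_eq_zero_of_notMem_tsupport
    intro hmem
    have := hRb hmem
    simp only [Metric.mem_closedBall, Real.dist_eq, sub_zero] at this
    exact absurd (le_max_of_le_left this) (not_le.2 hx)
  have hs : MeasurableSet {p : ℝ × ℝ | p.1 - p.2 = z} := by
    have hc : Continuous fun p : ℝ × ℝ => p.1 - p.2 := continuous_fst.sub continuous_snd
    exact hc.measurable (measurableSet_singleton z)
  have htarget : (ν.prod ν {p : ℝ × ℝ | p.1 - p.2 = z}).toReal =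
      ∫ p : ℝ × ℝ, Set.indicator {p : ℝ × ℝ | p.1 - p.2 = z} (fun _ => (1:ℝ)) p ∂ν.prod ν := by
    rw [integral_indicator_const _ hs, smul_eq_mul, mul_one]; rfl
  rw [htarget]
  apply tendsto_integral_filter_of_dominated_convergence (fun _ => (1:ℝ))
  · filter_upwards [self_mem_nhdsWithin] with ε hε
    exact PhiEps_aesm hφ ν ε z
  · filter_upwards [self_mem_nhdsWithin] with ε hε
    apply ae_of_all
    intro p
    rw [Real.norm_eq_abs, abs_of_nonneg (PhiEps_nonneg hnn ε _)]
    exact PhiEps_le_one hφ hsupp hnn hnorm hε _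
  · exact integrable_const 1
  · apply ae_of_all
    intro p
    by_cases hp : p.1 - p.2 = z
    · have hpmem : p ∈ {p : ℝ × ℝ | p.1 - p.2 = z} := hp
      rw [Set.indicator_of_mem hpmem]
      have hw : z + p.2 - p.1 = 0 := by rw [← hp]; ring
      rw [hw]
      apply Tendsto.congr' _ tendsto_const_nhds
      filter_upwards [self_mem_nhdsWithin] with ε hε
      exact (PhiEps_zero hnorm hε).symm
    · have hpmem : p ∉ {p : ℝ × ℝ | p.1 - p.2 = z} := hp
      rw [Set.indicator_of_notMem hpmem]
      have hw0 : z + p.2 - p.1 ≠ 0 := fun h => hp (by linarith)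
      apply Tendsto.congr' _ tendsto_const_nhds
      have hmem : Set.Ioo (0:ℝ) (|z + p.2 - p.1| / (R * 2)) ∈ nhdsWithin (0:ℝ) (Set.Ioi 0) := by
        apply Ioo_mem_nhdsGT_of_mem
        exact ⟨le_refl 0, by positivity⟩
      filter_upwards [hmem] with ε hε
      symm
      apply PhiEps_eq_zero hR0 hR hε.1
      have := (lt_div_iff₀ (by positivity : (0:ℝ) < R * 2)).1 hε.2
      nlinarith [hε.1]

end Aux

section Main

variable {φ : ℝ → ℝ}

lemma gamma_eq (hφ : Continuous φ) (hsupp : HasCompactSupport φ)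
    (hnn : ∀ q : ℝ, 0 ≤ φ q) (ν : Measure ℝ) [IsFiniteMeasure ν]
    {ε : ℝ} (hε : 0 < ε) (z : ℝ) :
    ∫ q : ℝ, psiEps φ ν ε (z + q) * psiEps φ ν ε q =
      (∫ p : ℝ × ℝ, PhiEps φ ε (p.1 - p.2) ∂ν.prod ν)⁻¹ *
        ∫ p : ℝ × ℝ, PhiEps φ ε (z + p.2 - p.1) ∂ν.prod ν := by
  set F : ℝ × ℝ → ℝ → ℝ := fun p q => phiEps φ ε (z + q - p.1) * phiEps φ ε (q - p.2) with hF
  have hFc : Continuous (Function.uncurry F) := by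
    apply Continuous.mul
    · exact (phiEps_continuous hφ ε).comp (by fun_prop)
    · exact (phiEps_continuous hφ ε).comp (by fun_prop)
  have hFnn : ∀ p q, 0 ≤ F p q :=
    fun p q => mul_nonneg (phiEps_nonneg hnn ε _) (phiEps_nonneg hnn ε _)
  obtain ⟨x₀, hx₀⟩ := (phiEps_continuous hφ ε).exists_forall_ge_of_hasCompactSupport
    (phiEps_hcs hsupp hε.ne')
  set C := phiEps φ ε x₀ with hC
  have hC0 : 0 ≤ C := phiEps_nonneg hnn ε x₀
  have hφi : Integrable (phiEps φ ε) := phiEps_integrable hφ hsupp hε.ne'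
  have hIq : ∀ p : ℝ × ℝ, Integrable (fun q => F p q) := by
    intro p
    have h2 : HasCompactSupport (fun q : ℝ => phiEps φ ε (q - p.2)) := by
      have : (fun q : ℝ => phiEps φ ε (q - p.2)) =
          phiEps φ ε ∘ (Homeomorph.subRight p.2) := rfl
      rw [this]
      exact (phiEps_hcs hsupp hε.ne').comp_homeomorph _
    have heq : (fun q => F p q) =
        (fun q : ℝ => phiEps φ ε (z + q - p.1)) * (fun q : ℝ => phiEps φ ε (q - p.2)) := rfl
    have h3 : HasCompactSupport (fun q => F p q) := by rw [heq]; exact h2.mul_left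
    exact (hFc.comp (Continuous.prodMk_right p)).integrable_of_hasCompactSupport h3
  have hInt : Integrable (Function.uncurry F) ((ν.prod ν).prod volume) := by
    rw [integrable_prod_iff hFc.aestronglyMeasurable]
    constructor
    · exact ae_of_all _ fun p => hIq p
    · have hmeas : StronglyMeasurable (fun p : ℝ × ℝ => ∫ q : ℝ, ‖F p q‖) := by
        exact (hFc.norm.stronglyMeasurable).integral_prod_right'
      apply Integrable.mono' (integrable_const (C * ∫ q : ℝ, phiEps φ ε q))
        hmeas.aestronglyMeasurable
      apply ae_of_all
      intro p
      rw [Real.norm_eq_abs, abs_of_nonneg (integral_nonneg fun q => norm_nonneg _)]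
      have hb : ∫ q : ℝ, ‖F p q‖ ≤ ∫ q : ℝ, C * phiEps φ ε (q - p.2) := by
        apply integral_mono_of_nonneg (ae_of_all _ fun q => norm_nonneg _)
        · exact (hφi.comp_sub_right p.2).const_mul C
        · apply ae_of_all
          intro q
          show ‖F p q‖ ≤ C * phiEps φ ε (q - p.2)
          rw [Real.norm_eq_abs, abs_of_nonneg (hFnn p q)]
          exact mul_le_mul (hx₀ _) le_rfl (phiEps_nonneg hnn ε _) hC0
      calc ∫ q : ℝ, ‖F p q‖ ≤ ∫ q : ℝ, C * phiEps φ ε (q - p.2) := hb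
        _ = C * ∫ q : ℝ, phiEps φ ε (q - p.2) := integral_const_mul _ _
        _ = C * ∫ q : ℝ, phiEps φ ε q := by
            rw [integral_sub_right_eq_self (μ := volume) (phiEps φ ε) p.2]
  have step2 : ∀ p : ℝ × ℝ, ∫ q : ℝ, F p q = PhiEps φ ε (z + p.2 - p.1) := by
    intro p
    have h := integral_add_right_eq_self (μ := volume)
      (fun q => phiEps φ ε (z + p.2 - p.1 + q) * phiEps φ ε q) (-p.2)
    show (∫ q : ℝ, F p q) = ∫ q : ℝ, phiEps φ ε (z + p.2 - p.1 + q) * phiEps φ ε q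
    rw [← h]
    congr 1
    funext x
    show phiEps φ ε (z + x - p.1) * phiEps φ ε (x - p.2) =
      phiEps φ ε (z + p.2 - p.1 + (x + -p.2)) * phiEps φ ε (x + -p.2)
    rw [show z + p.2 - p.1 + (x + -p.2) = z + x - p.1 by ring, show x + -p.2 = x - p.2 by ring]
  have step1 : ∀ q : ℝ, psiEps φ ν ε (z + q) * psiEps φ ν ε q =
      cEps φ ν ε ^ 2 * ∫ p : ℝ × ℝ, F p q ∂ν.prod ν := by
    intro q
    unfold psiEps
    rw [show (∫ p : ℝ × ℝ, F p q ∂ν.prod ν) =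
        (∫ q₁ : ℝ, phiEps φ ε (z + q - q₁) ∂ν) * ∫ q₂ : ℝ, phiEps φ ε (q - q₂) ∂ν from
      integral_prod_mul (fun q₁ => phiEps φ ε (z + q - q₁)) (fun q₂ => phiEps φ ε (q - q₂))]
    ring
  have hN : (0:ℝ) ≤ ∫ p : ℝ × ℝ, PhiEps φ ε (p.1 - p.2) ∂ν.prod ν :=
    integral_nonneg fun p => PhiEps_nonneg hnn ε _
  have hc2 : cEps φ ν ε ^ 2 = (∫ p : ℝ × ℝ, PhiEps φ ε (p.1 - p.2) ∂ν.prod ν)⁻¹ := by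
    rw [cEps, inv_pow, Real.sq_sqrt hN]
  calc ∫ q : ℝ, psiEps φ ν ε (z + q) * psiEps φ ν ε q
      = ∫ q : ℝ, cEps φ ν ε ^ 2 * ∫ p : ℝ × ℝ, F p q ∂ν.prod ν := by simp_rw [step1]
    _ = cEps φ ν ε ^ 2 * ∫ q : ℝ, ∫ p : ℝ × ℝ, F p q ∂ν.prod ν := integral_const_mul _ _
    _ = cEps φ ν ε ^ 2 * ∫ p : ℝ × ℝ, ∫ q : ℝ, F p q ∂volume ∂ν.prod ν := by
        rw [integral_integral_swap hInt]
    _ = cEps φ ν ε ^ 2 * ∫ p : ℝ × ℝ, PhiEps φ ε (z + p.2 - p.1) ∂ν.prod ν := by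
        simp_rw [step2]
    _ = _ := by rw [hc2]

end Main

theorem stmt_9 (φ : ℝ → ℝ) (hsmooth : ContDiff ℝ (⊤ : ℕ∞) φ) (hsupp : HasCompactSupport φ)
    (hnn : ∀ q : ℝ, 0 ≤ φ q) (hsym : ∀ q : ℝ, φ (-q) = φ q)
    (hnorm : ∫ q : ℝ, (φ q) ^ 2 = 1)
    (ν : Measure ℝ) [IsFiniteMeasure ν]
    (hatom : 0 < ν.prod ν {p : ℝ × ℝ | p.1 - p.2 = 0})
    (hpsinorm : ∀ ε : ℝ, 0 < ε → ∫ z : ℝ, (psiEps φ ν ε z) ^ 2 = 1)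
    (z : ℝ) :
    Filter.Tendsto (fun ε : ℝ => ∫ q : ℝ, psiEps φ ν ε (z + q) * psiEps φ ν ε q)
      (nhdsWithin 0 (Set.Ioi 0))
      (nhds ((ν.prod ν {p : ℝ × ℝ | p.1 - p.2 = z}).toReal /
        (ν.prod ν {p : ℝ × ℝ | p.1 - p.2 = 0}).toReal)) := by
  have hφ : Continuous φ := hsmooth.continuous
  have hMz := tendsto_integral_PhiEps hφ hsupp hnn hnorm ν z
  have hN0 : Tendsto (fun ε : ℝ => ∫ p : ℝ × ℝ, PhiEps φ ε (p.1 - p.2) ∂ν.prod ν)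
      (nhdsWithin 0 (Set.Ioi 0))
      (nhds ((ν.prod ν {p : ℝ × ℝ | p.1 - p.2 = 0}).toReal)) := by
    apply (tendsto_integral_PhiEps hφ hsupp hnn hnorm ν 0).congr
    intro ε
    congr 1
    funext p
    rw [show (0:ℝ) + p.2 - p.1 = -(p.1 - p.2) by ring, PhiEps_even]
  have hd : (ν.prod ν {p : ℝ × ℝ | p.1 - p.2 = 0}).toReal ≠ 0 :=
    (ENNReal.toReal_pos hatom.ne' (measure_ne_top _ _)).ne'
  have hdiv : Tendsto (fun ε : ℝ =>
      (∫ p : ℝ × ℝ, PhiEps φ ε (z + p.2 - p.1) ∂ν.prod ν) /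
        ∫ p : ℝ × ℝ, PhiEps φ ε (p.1 - p.2) ∂ν.prod ν)
      (nhdsWithin 0 (Set.Ioi 0))
      (nhds ((ν.prod ν {p : ℝ × ℝ | p.1 - p.2 = z}).toReal /
        (ν.prod ν {p : ℝ × ℝ | p.1 - p.2 = 0}).toReal)) := hMz.div hN0 hd
  apply Tendsto.congr' _ hdiv
  filter_upwards [self_mem_nhdsWithin] with ε hε
  rw [div_eq_mul_inv, mul_comm, ← gamma_eq hφ hsupp hnn ν hε z]
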